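/- arXiv:2303.09532 — 2 statements merged into one kernel-verified Lean document; each statement's English description precedes it below -/
import Mathlib

section
/- Let f : ℝⁿ → ℝ be C¹ and strictly convex with unique global minimizer ȳ, φ : ℝⁿ → ℝ C², strictly convex, Legendre type, with conjugate φ*; set x̄ := ∇φ(ȳ), y₀ := ∇φ*(x₀), q(x, u) := f(∇φ*(x)) + f*(−u) + ⟨u, ȳ⟩. Let x : [0, ∞) → ℝⁿ solve ẋ(t) = −∇f(∇φ*(x(t))), x(0) = x₀, and suppose x(t) → x̄ as t → ∞. Then with u(t) := −∇f(∇φ*(x(t))), the infinite-horizon cost satisfies ∫₀^∞ q(x(t), u(t)) dt = D_{φ*}(x₀, x̄) = D_φ(ȳ, y₀), i.e., the limit as t → ∞ of ∫₀ᵗ q(x(s), u(s)) ds equals D_{φ*}(x₀, x̄). -/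
/-!
Along the flow, `V(t) = D_{φ*}(x(t), x̄)` has derivative `⟪∇φ*(x) - ȳ, ẋ⟫ = -⟪∇f(y), y - ȳ⟫`
with `y = ∇φ*(x)`, and by the Fenchel–Young equality `f*(∇f(y)) = ⟪∇f(y), y⟫ - f(y)` this is
exactly `-q(x, u)`. Hence `∫₀ᵗ q = V(0) - V(t) → V(0)` because `x(t) → x̄`.

Both this and the duality `D_{φ*}(x₀, x̄) = D_φ(ȳ, y₀)` rest on `∇φ` being a homeomorphism with
inverse `∇φ*`: strict convexity makes `∇φ` injective and makes `φ` grow linearly away from each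
tangent plane, so the range of `∇φ` is open; the Legendre condition makes `∇φ` a proper map, so
its range is closed and its inverse continuous.
-/

open scoped RealInnerProductSpace
open Filter MeasureTheory

/-- Legendre–Fenchel conjugate: `ψ*(v) = sup_x { ⟨v, x⟩ − ψ(x) }`. -/
noncomputable def fenchel {n : ℕ} (ψ : EuclideanSpace ℝ (Fin n) → ℝ)
    (v : EuclideanSpace ℝ (Fin n)) : ℝ :=
  ⨆ z : EuclideanSpace ℝ (Fin n), (⟪v, z⟫ - ψ z)

/-- Bregman divergence: `D_ψ(y, y') = ψ(y) − ψ(y') − ⟨∇ψ(y'), y − y'⟩`. -/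
noncomputable def bregman {n : ℕ} (ψ : EuclideanSpace ℝ (Fin n) → ℝ)
    (y y' : EuclideanSpace ℝ (Fin n)) : ℝ :=
  ψ y - ψ y' - ⟪gradient ψ y', y - y'⟫

/-- `φ` is of Legendre type: `|∇φ(x)| → ∞` as `|x| → ∞`. -/
def LegendreType {n : ℕ} (φ : EuclideanSpace ℝ (Fin n) → ℝ) : Prop :=
  Tendsto (fun z => ‖gradient φ z‖) (cocompact (EuclideanSpace ℝ (Fin n))) atTop

open Set Topology InnerProductSpace

section Gradient

variable {E : Type*} [NormedAddCommGroup E] [InnerProductSpace ℝ E] [CompleteSpace E]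
  {φ : E → ℝ}

theorem ContDiff.continuous_gradient (hφ : ContDiff ℝ 1 φ) : Continuous (gradient φ) :=
  (toDual ℝ E).symm.continuous.comp (hφ.continuous_fderiv one_ne_zero)

theorem ConvexOn.inner_gradient_sub_le (hφ : ConvexOn ℝ univ φ) {a : E}
    (hd : DifferentiableAt ℝ φ a) (b : E) : ⟪gradient φ a, b - a⟫ ≤ φ b - φ a := by
  have hline : HasDerivAt (fun t : ℝ => φ (AffineMap.lineMap a b t)) ⟪gradient φ a, b - a⟫ 0 := by
    have hc : HasDerivAt (fun t : ℝ => AffineMap.lineMap a b t) (b - a) 0 :=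
      AffineMap.hasDerivAt_lineMap
    have hda : HasFDerivAt φ (toDual ℝ E (gradient φ a)) (AffineMap.lineMap a b (0 : ℝ)) := by
      simpa using hd.hasGradientAt.hasFDerivAt
    simpa [Function.comp_def] using hda.comp_hasDerivAt (0 : ℝ) hc
  simpa [slope_def_field] using
    (hφ.comp_affineMap (AffineMap.lineMap a b)).le_slope_of_hasDerivAt (mem_univ 0)
      (mem_univ 1) one_pos hline

theorem StrictConvexOn.inner_gradient_sub_lt (hφ : StrictConvexOn ℝ univ φ) {a b : E}
    (hd : DifferentiableAt ℝ φ a) (hab : a ≠ b) : ⟪gradient φ a, b - a⟫ < φ b - φ a := by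
  have hmid : φ ((1 / 2 : ℝ) • a + (1 / 2 : ℝ) • b) < (1 / 2 : ℝ) • φ a + (1 / 2 : ℝ) • φ b :=
    hφ.2 (mem_univ a) (mem_univ b) hab (by norm_num) (by norm_num) (by norm_num)
  have hle := hφ.convexOn.inner_gradient_sub_le hd ((1 / 2 : ℝ) • a + (1 / 2 : ℝ) • b)
  have hsub : (1 / 2 : ℝ) • a + (1 / 2 : ℝ) • b - a = (1 / 2 : ℝ) • (b - a) := by module
  rw [hsub, real_inner_smul_right] at hle
  simp only [smul_eq_mul] at hmid
  linarith

theorem StrictConvexOn.injective_gradient (hφ : StrictConvexOn ℝ univ φ)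
    (hd : Differentiable ℝ φ) : Function.Injective (gradient φ) := by
  intro a b hab
  by_contra hne
  have h₁ := hφ.inner_gradient_sub_lt (hd a) hne
  have h₂ := hφ.inner_gradient_sub_lt (hd b) (Ne.symm hne)
  rw [hab] at h₁
  rw [← neg_sub b a, inner_neg_right] at h₂
  linarith

theorem ConvexOn.iSup_inner_sub_eq (hφ : ConvexOn ℝ univ φ) {w : E}
    (hd : DifferentiableAt ℝ φ w) :
    (⨆ z, ⟪gradient φ w, z⟫ - φ z) = ⟪gradient φ w, w⟫ - φ w := by
  have hle : ∀ z, ⟪gradient φ w, z⟫ - φ z ≤ ⟪gradient φ w, w⟫ - φ w := fun z => by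
    have := hφ.inner_gradient_sub_le hd z
    rw [inner_sub_right] at this
    linarith
  exact le_antisymm (ciSup_le hle) (le_ciSup ⟨_, forall_mem_range.2 hle⟩ w)

/-- The first-order remainder of the conjugate at `v` lies between `0` and `⟪w - v, T w - T v⟫`. -/
theorem ConvexOn.hasGradientAt_iSup_inner_sub (hφ : ConvexOn ℝ univ φ) (hd : Differentiable ℝ φ)
    {T : E → E} (hTc : Continuous T) (hT : ∀ v, gradient φ (T v) = v) (v : E) :
    HasGradientAt (fun v => ⨆ z, ⟪v, z⟫ - φ z) (T v) v := by
  set ψ : E → ℝ := fun v => ⨆ z, ⟪v, z⟫ - φ z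
  have hψ : ∀ w, ψ w = ⟪w, T w⟫ - φ (T w) := fun w => by
    simpa only [hT] using hφ.iSup_inner_sub_eq (hd (T w))
  have hremainder : ∀ w, 0 ≤ ψ w - ψ v - ⟪T v, w - v⟫ ∧
      ψ w - ψ v - ⟪T v, w - v⟫ ≤ ‖w - v‖ * ‖T w - T v‖ := fun w => by
    have hw := hφ.inner_gradient_sub_le (hd (T w)) (T v)
    have hv := hφ.inner_gradient_sub_le (hd (T v)) (T w)
    have hcs := real_inner_le_norm (w - v) (T w - T v)
    rw [hT] at hw hv
    simp only [hψ, inner_sub_left, inner_sub_right, real_inner_comm (T v)] at hw hv hcs ⊢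
    constructor <;> linarith
  rw [hasGradientAt_iff_isLittleO, Asymptotics.isLittleO_iff]
  intro c hc
  filter_upwards [Metric.closedBall_mem_nhds (T v) hc |> hTc.continuousAt.preimage_mem_nhds]
    with w hw
  rw [Real.norm_eq_abs, abs_of_nonneg (hremainder w).1, mul_comm c]
  exact (hremainder w).2.trans
    (mul_le_mul_of_nonneg_left (by simpa [dist_eq_norm] using hw) (norm_nonneg _))

theorem exists_gradient_eq_of_tendsto_cocompact (hd : Differentiable ℝ φ) {v : E}
    (hcoer : Tendsto (fun w => φ w - ⟪v, w⟫) (cocompact E) atTop) : ∃ z, gradient φ z = v := by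
  obtain ⟨z, hz⟩ := (hd.continuous.sub (continuous_const.inner continuous_id)).exists_forall_le
    hcoer
  refine ⟨z, ?_⟩
  have hcrit := IsLocalMin.hasFDerivAt_eq_zero (Eventually.of_forall hz)
    ((hd z).hasFDerivAt.sub (innerSL ℝ v).hasFDerivAt)
  have hfderiv : fderiv ℝ φ z = toDual ℝ E v := by
    ext w
    simpa [sub_eq_zero] using DFunLike.congr_fun hcrit w
  rw [gradient, hfderiv, LinearIsometryEquiv.symm_apply_apply]

section FiniteDimensional

variable [FiniteDimensional ℝ E]

/-- `c` is the minimum over the unit sphere around `z` of the excess over the tangent plane;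
convexity propagates it outward. -/
theorem StrictConvexOn.exists_pos_mul_le_sub_inner_gradient (hφ : StrictConvexOn ℝ univ φ)
    (hd : Differentiable ℝ φ) (z : E) :
    ∃ c > 0, ∀ w, c * (‖w - z‖ - 1) ≤ φ w - φ z - ⟪gradient φ z, w - z⟫ := by
  have hcont : Continuous fun w => φ w - φ z - ⟪gradient φ z, w - z⟫ := by
    have := hd.continuous
    fun_prop
  obtain ⟨c, hc, hsphere⟩ := (isCompact_sphere z 1).exists_forall_le' hcont.continuousOn
    (a := 0) fun u hu => by
      have := hφ.inner_gradient_sub_lt (hd z) (Metric.ne_of_mem_sphere hu one_ne_zero).symm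
      linarith
  refine ⟨c, hc, fun w => ?_⟩
  rcases le_or_gt ‖w - z‖ 1 with hw | hw
  · have := hφ.convexOn.inner_gradient_sub_le (hd z) w
    nlinarith
  · set t := ‖w - z‖
    have ht : 0 < t := by linarith
    have hu : z + t⁻¹ • (w - z) ∈ Metric.sphere z 1 := by
      simp [norm_smul, t, ht.ne']
    have hconv := hφ.convexOn.2 (mem_univ z) (mem_univ w)
      (sub_nonneg.2 (inv_le_one_of_one_le₀ hw.le)) (inv_pos.2 ht).le (sub_add_cancel 1 t⁻¹)
    have heq : (1 - t⁻¹) • z + t⁻¹ • w = z + t⁻¹ • (w - z) := by module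
    rw [heq, smul_eq_mul, smul_eq_mul] at hconv
    have hcu := hsphere _ hu
    simp only [add_sub_cancel_left, real_inner_smul_right] at hcu
    have hct : c ≤ t⁻¹ * (φ w - φ z - ⟪gradient φ z, w - z⟫) := by linarith
    rw [le_inv_mul_iff₀ ht] at hct
    nlinarith

theorem StrictConvexOn.isOpen_range_gradient (hφ : StrictConvexOn ℝ univ φ)
    (hd : Differentiable ℝ φ) : IsOpen (range (gradient φ)) := by
  rw [Metric.isOpen_iff]
  rintro _ ⟨z, rfl⟩
  obtain ⟨c, hc, hgrowth⟩ := hφ.exists_pos_mul_le_sub_inner_gradient hd z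
  refine ⟨c, hc, fun v hv => exists_gradient_eq_of_tendsto_cocompact hd ?_⟩
  rw [Metric.mem_ball, dist_eq_norm] at hv
  have hlin : Tendsto (fun w => (c - ‖v - gradient φ z‖) * ‖w - z‖ + (φ z - ⟪v, z⟫ - c))
      (cocompact E) atTop := by
    refine tendsto_atTop_add_const_right _ _ (Tendsto.const_mul_atTop (by linarith) ?_)
    simpa [dist_eq_norm] using tendsto_dist_right_cocompact_atTop z
  refine tendsto_atTop_mono (fun w => ?_) hlin
  have hcs := real_inner_le_norm (v - gradient φ z) (w - z)
  have := hgrowth w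
  simp only [inner_sub_left, inner_sub_right] at hcs this ⊢
  nlinarith [norm_nonneg (w - z)]

theorem isProperMap_of_tendsto_norm_cocompact {X F : Type*} [TopologicalSpace X]
    [NormedAddCommGroup F] [ProperSpace F] {g : X → F} (hg : Continuous g)
    (h : Tendsto (‖g ·‖) (cocompact X) atTop) : IsProperMap g :=
  isProperMap_iff_tendsto_cocompact.2
    ⟨hg, Metric.cobounded_eq_cocompact (α := F) ▸ tendsto_norm_atTop_iff_cobounded.1 h⟩

theorem StrictConvexOn.surjective_gradient (hφ : StrictConvexOn ℝ univ φ)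
    (hd : Differentiable ℝ φ) (hgc : Continuous (gradient φ))
    (hleg : Tendsto (fun z => ‖gradient φ z‖) (cocompact E) atTop) :
    Function.Surjective (gradient φ) := by
  have hclosed : IsClosed (range (gradient φ)) :=
    (isProperMap_of_tendsto_norm_cocompact hgc hleg).isClosedMap.isClosed_range
  exact range_eq_univ.1 <|
    IsClopen.eq_univ ⟨hclosed, hφ.isOpen_range_gradient hd⟩ (range_nonempty _)

theorem StrictConvexOn.exists_homeomorph_eq_gradient (hφ : StrictConvexOn ℝ univ φ)
    (hd : Differentiable ℝ φ) (hgc : Continuous (gradient φ))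
    (hleg : Tendsto (fun z => ‖gradient φ z‖) (cocompact E) atTop) :
    ∃ e : E ≃ₜ E, ⇑e = gradient φ :=
  ⟨(Equiv.ofBijective _ ⟨hφ.injective_gradient hd, hφ.surjective_gradient hd hgc hleg⟩)
    |>.toHomeomorphOfContinuousClosed hgc
      (isProperMap_of_tendsto_norm_cocompact hgc hleg).isClosedMap, rfl⟩

end FiniteDimensional

end Gradient

theorem tendsto_intervalIntegral_of_hasDerivAt_neg {V g : ℝ → ℝ} {L : ℝ}
    (hV : ∀ t, 0 ≤ t → HasDerivAt V (-g t) t) (hg : ContinuousOn g (Ici 0))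
    (hlim : Tendsto V atTop (𝓝 L)) :
    Tendsto (fun t => ∫ s in (0 : ℝ)..t, g s) atTop (𝓝 (V 0 - L)) := by
  refine (tendsto_const_nhds.sub hlim).congr' ?_
  filter_upwards [eventually_ge_atTop 0] with t ht
  have hsub : uIcc 0 t ⊆ Ici 0 := by
    rw [uIcc_of_le ht]
    exact Icc_subset_Ici_self
  rw [intervalIntegral.integral_eq_sub_of_hasDerivAt (f := -V)
    (fun s hs => by simpa using (hV s (hsub hs)).neg) ((hg.mono hsub).intervalIntegrable),
    Pi.neg_apply, Pi.neg_apply]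
  ring

section Bregman

variable {n : ℕ}

@[simp]
theorem bregman_self (ψ : EuclideanSpace ℝ (Fin n) → ℝ) (y : EuclideanSpace ℝ (Fin n)) :
    bregman ψ y y = 0 := by
  simp [bregman]

theorem HasDerivAt.bregman_left {ψ : EuclideanSpace ℝ (Fin n) → ℝ}
    {x : ℝ → EuclideanSpace ℝ (Fin n)} {v x' : EuclideanSpace ℝ (Fin n)} {t : ℝ}
    (hx : HasDerivAt x v t) (hψ : DifferentiableAt ℝ ψ (x t)) :
    HasDerivAt (fun s => bregman ψ (x s) x') ⟪gradient ψ (x t) - gradient ψ x', v⟫ t := by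
  have hψx := hψ.hasGradientAt.hasFDerivAt.comp_hasDerivAt t hx
  have hlin := (innerSL ℝ (gradient ψ x')).hasFDerivAt.comp_hasDerivAt t (hx.sub_const x')
  simp only [Function.comp_def, toDual_apply_apply, innerSL_apply_apply] at hψx hlin
  rw [inner_sub_left]
  exact (hψx.sub_const _).sub hlin

theorem ConvexOn.fenchel_gradient {φ : EuclideanSpace ℝ (Fin n) → ℝ} (hφ : ConvexOn ℝ univ φ)
    {y : EuclideanSpace ℝ (Fin n)} (hd : DifferentiableAt ℝ φ y) :
    fenchel φ (gradient φ y) = ⟪gradient φ y, y⟫ - φ y :=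
  hφ.iSup_inner_sub_eq hd

theorem tendsto_intervalIntegral_bregman_dissipation {ψ : EuclideanSpace ℝ (Fin n) → ℝ}
    (hψ : Differentiable ℝ ψ) {x v : ℝ → EuclideanSpace ℝ (Fin n)} {a : EuclideanSpace ℝ (Fin n)}
    (hx : ∀ t, 0 ≤ t → HasDerivAt x (v t) t)
    (hcont : ContinuousOn (fun t => ⟪gradient ψ (x t) - gradient ψ a, v t⟫) (Ici 0))
    (hlim : Tendsto x atTop (𝓝 a)) :
    Tendsto (fun t => ∫ s in (0 : ℝ)..t, -⟪gradient ψ (x s) - gradient ψ a, v s⟫) atTop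
      (𝓝 (bregman ψ (x 0) a)) := by
  have hV (t : ℝ) (ht : 0 ≤ t) : HasDerivAt (fun t => bregman ψ (x t) a)
      (- -⟪gradient ψ (x t) - gradient ψ a, v t⟫) t := by
    simpa only [neg_neg] using (hx t ht).bregman_left (hψ _)
  have hB : Tendsto (fun t => bregman ψ (x t) a) atTop (𝓝 0) := by
    have hc : Continuous fun y => bregman ψ y a := by
      have := hψ.continuous
      unfold bregman
      fun_prop
    have := (hc.tendsto a).comp hlim
    rwa [bregman_self] at this
  simpa using tendsto_intervalIntegral_of_hasDerivAt_neg hV hcont.neg hB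

theorem ConvexOn.bregman_fenchel {φ : EuclideanSpace ℝ (Fin n) → ℝ} (hφ : ConvexOn ℝ univ φ)
    (hd : Differentiable ℝ φ) {T : EuclideanSpace ℝ (Fin n) → EuclideanSpace ℝ (Fin n)}
    (hTc : Continuous T) (hT : ∀ v, gradient φ (T v) = v) (x x' : EuclideanSpace ℝ (Fin n)) :
    bregman (fenchel φ) x x' = bregman φ (T x') (T x) := by
  have hgrad : gradient (fenchel φ) x' = T x' :=
    (hφ.hasGradientAt_iSup_inner_sub hd hTc hT x').gradient
  have hval : ∀ v, fenchel φ v = ⟪v, T v⟫ - φ (T v) := fun v => by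
    simpa only [hT] using hφ.fenchel_gradient (hd (T v))
  rw [bregman, bregman, hgrad, hval, hval, hT]
  simp only [inner_sub_right, real_inner_comm (T x')]
  ring

end Bregman

theorem mirror_descent_optimal_cost_general {n : ℕ} (f φ : EuclideanSpace ℝ (Fin n) → ℝ)
    (hf : ContDiff ℝ 1 f) (hfconv : StrictConvexOn ℝ Set.univ f)
    (ybar : EuclideanSpace ℝ (Fin n))
    (hφ : ContDiff ℝ 2 φ) (hφconv : StrictConvexOn ℝ Set.univ φ)
    (hleg : LegendreType φ)
    (xbar : EuclideanSpace ℝ (Fin n)) (hxbar : xbar = gradient φ ybar)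
    (q : EuclideanSpace ℝ (Fin n) → EuclideanSpace ℝ (Fin n) → ℝ)
    (hq : q = fun x u => f (gradient (fenchel φ) x) + fenchel f (-u) + ⟪u, ybar⟫)
    (x₀ y₀ : EuclideanSpace ℝ (Fin n)) (hy₀ : y₀ = gradient (fenchel φ) x₀)
    (x : ℝ → EuclideanSpace ℝ (Fin n)) (hx0 : x 0 = x₀)
    (hode : ∀ t : ℝ, 0 ≤ t →
      HasDerivAt x (-gradient f (gradient (fenchel φ) (x t))) t)
    (hstab : Tendsto x atTop (nhds xbar)) :
    Tendsto (fun t : ℝ =>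
        ∫ s in (0:ℝ)..t, q (x s) (-gradient f (gradient (fenchel φ) (x s))))
      atTop (nhds (bregman (fenchel φ) x₀ xbar)) ∧
    bregman (fenchel φ) x₀ xbar = bregman φ ybar y₀ := by
  subst hq hxbar hy₀ hx0
  have hφd : Differentiable ℝ φ := hφ.differentiable two_ne_zero
  obtain ⟨e, he⟩ := hφconv.exists_homeomorph_eq_gradient hφd
    (hφ.of_le one_le_two).continuous_gradient hleg
  have hT : ∀ v, gradient φ (e.symm v) = v := fun v => he ▸ e.apply_symm_apply v
  have hψ : ∀ v, HasGradientAt (fenchel φ) (e.symm v) v :=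
    hφconv.convexOn.hasGradientAt_iSup_inner_sub hφd e.symm.continuous hT
  have hgradψ : gradient (fenchel φ) = e.symm := funext fun v => (hψ v).gradient
  have hybar : e.symm (gradient φ ybar) = ybar := he ▸ e.symm_apply_apply ybar
  refine ⟨?_, by rw [hφconv.convexOn.bregman_fenchel hφd e.symm.continuous hT, hybar, hgradψ]⟩
  have hy : ContinuousOn (fun t => e.symm (x t)) (Ici 0) := fun t ht =>
    e.symm.continuous.continuousAt.comp_continuousWithinAt
      (hode t ht).continuousAt.continuousWithinAt
  have hcont : ContinuousOn (fun t => ⟪gradient (fenchel φ) (x t) - gradient (fenchel φ)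
      (gradient φ ybar), -gradient f (gradient (fenchel φ) (x t))⟫) (Ici 0) := by
    rw [hgradψ]
    exact (hy.sub continuousOn_const).inner (hf.continuous_gradient.comp_continuousOn hy).neg
  refine (tendsto_intervalIntegral_bregman_dissipation (fun v => (hψ v).differentiableAt) hode
    hcont hstab).congr fun t => intervalIntegral.integral_congr fun s _ => ?_
  simp only [neg_neg, hfconv.convexOn.fenchel_gradient (hf.differentiable one_ne_zero _), hgradψ,
    hybar, inner_neg_left, inner_neg_right, inner_sub_left]
  rw [real_inner_comm (e.symm (x s)), real_inner_comm ybar]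
  ring

/-- along the mirror-descent closed loop with `x(t) → x̄`, the
infinite-horizon cost of `u(t) = −∇f(∇φ*(x(t)))` equals
`D_{φ*}(x₀, x̄) = D_φ(ȳ, y₀)`, i.e. `∫₀ᵗ q → D_{φ*}(x₀, x̄)` as `t → ∞`. -/
theorem mirror_descent_optimal_cost {n : ℕ} (f φ : EuclideanSpace ℝ (Fin n) → ℝ)
    (hf : ContDiff ℝ 1 f) (hfconv : StrictConvexOn ℝ Set.univ f)
    (ybar : EuclideanSpace ℝ (Fin n)) (hmin : ∀ z, f ybar ≤ f z)
    (hφ : ContDiff ℝ 2 φ) (hφconv : StrictConvexOn ℝ Set.univ φ)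
    (hleg : LegendreType φ)
    (xbar : EuclideanSpace ℝ (Fin n)) (hxbar : xbar = gradient φ ybar)
    (q : EuclideanSpace ℝ (Fin n) → EuclideanSpace ℝ (Fin n) → ℝ)
    (hq : q = fun x u => f (gradient (fenchel φ) x) + fenchel f (-u) + ⟪u, ybar⟫)
    (x₀ y₀ : EuclideanSpace ℝ (Fin n)) (hy₀ : y₀ = gradient (fenchel φ) x₀)
    (x : ℝ → EuclideanSpace ℝ (Fin n)) (hx0 : x 0 = x₀)
    (hode : ∀ t : ℝ, 0 ≤ t →
      HasDerivAt x (-gradient f (gradient (fenchel φ) (x t))) t)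
    (hstab : Tendsto x atTop (nhds xbar)) :
    Tendsto (fun t : ℝ =>
        ∫ s in (0:ℝ)..t, q (x s) (-gradient f (gradient (fenchel φ) (x s))))
      atTop (nhds (bregman (fenchel φ) x₀ xbar)) ∧
    bregman (fenchel φ) x₀ xbar = bregman φ ybar y₀ :=
  mirror_descent_optimal_cost_general f φ hf hfconv ybar hφ hφconv hleg xbar hxbar q hq x₀ y₀ hy₀ x
    hx0 hode hstab
end

section
/- Let f : ℝⁿ → ℝ be C¹, strictly convex with unique global minimizer ȳ, and μ-strongly convex (μ > 0) with respect to a C², strictly convex, Legendre-type potential φ : ℝⁿ → ℝ with conjugate φ*. Let (x(t), y(t)) be the state and output trajectories of the mirror descent dynamics ẋ(t) = −∇f(∇φ*(x(t))), y(t) = ∇φ*(x(t)), with x(0) = x₀ and y₀ = ∇φ*(x₀). Then for every t ≥ 0, D_φ(ȳ, y(t)) ≤ D_φ(ȳ, y₀) e^{−μt}. -/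
open scoped RealInnerProductSpace
open Filter MeasureTheory

/-! Since `∇φ*` inverts `∇φ`, the Lyapunov function `V(t) = D_φ(ȳ, y(t))` equals
`φ(ȳ) + φ*(x(t)) − ⟨x(t), ȳ⟩`, so `V' = ⟨ẋ, y − ȳ⟩ = ⟨∇f(y), ȳ − y⟩ ≤ f(ȳ) − f(y) − μ V ≤ −μ V`
by strong convexity and minimality of `ȳ`; Grönwall's inequality gives the rate.

That `∇φ*` exists and inverts `∇φ` is the Legendre duality: strict convexity makes `∇φ` injective,
and the growth of `‖∇φ‖` makes it proper and surjective (a minimizer of `φ − ⟨v, ·⟩` over a large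
ball has a bounded gradient, hence lies inside the ball). So `∇φ` is a homeomorphism, and its
inverse is a continuous selection of subgradients of `φ*`, hence the gradient of `φ*`. -/

open Set Topology Metric

section Gradient

variable {E : Type*} [NormedAddCommGroup E] [InnerProductSpace ℝ E] [CompleteSpace E]
  {g : E → ℝ} {a b : E} {G : E}

theorem HasGradientAt.comp_hasDerivAt {x : ℝ → E} {x' : E} {t : ℝ}
    (hg : HasGradientAt g G (x t)) (hx : HasDerivAt x x' t) :
    HasDerivAt (fun s => g (x s)) ⟪G, x'⟫ t := by
  simpa [Function.comp_def] using hg.hasFDerivAt.comp_hasDerivAt t hx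

theorem ConvexOn.add_inner_gradient_le (hc : ConvexOn ℝ univ g) (hg : HasGradientAt g G a)
    (b : E) : g a + ⟪G, b - a⟫ ≤ g b := by
  set line : ℝ →ᵃ[ℝ] E := AffineMap.lineMap a b
  have hline : ConvexOn ℝ univ (g ∘ line) := by simpa using hc.comp_affineMap line
  have hderiv : HasDerivAt (g ∘ line) ⟪G, b - a⟫ 0 := by
    refine HasGradientAt.comp_hasDerivAt (x := line) ?_ AffineMap.hasDerivAt_lineMap
    simpa [line] using hg
  have := hline.le_slope_of_hasDerivAt (mem_univ 0) (mem_univ 1) one_pos hderiv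
  simp only [slope_def_field, Function.comp_apply, line, AffineMap.lineMap_apply_zero,
    AffineMap.lineMap_apply_one] at this
  linarith

theorem ConvexOn.inner_sub_le_of_hasGradientAt (hc : ConvexOn ℝ univ g)
    (hg : HasGradientAt g G a) (b : E) : ⟪G, b⟫ - g b ≤ ⟪G, a⟫ - g a := by
  have := hc.add_inner_gradient_le hg b
  rw [inner_sub_right] at this
  linarith

theorem StrictConvexOn.add_inner_gradient_lt (hc : StrictConvexOn ℝ univ g)
    (hg : HasGradientAt g G a) (hab : a ≠ b) : g a + ⟪G, b - a⟫ < g b := by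
  have hmid := hc.2 (mem_univ a) (mem_univ b) hab (by norm_num : (0 : ℝ) < 1 / 2)
    (by norm_num : (0 : ℝ) < 1 / 2) (by norm_num)
  have htangent := hc.convexOn.add_inner_gradient_le hg ((1 / 2 : ℝ) • a + (1 / 2 : ℝ) • b)
  rw [show (1 / 2 : ℝ) • a + (1 / 2 : ℝ) • b - a = (1 / 2 : ℝ) • (b - a) by module,
    real_inner_smul_right] at htangent
  simp only [smul_eq_mul] at hmid
  linarith

theorem ConvexOn.inner_sub_gradient_nonneg (hc : ConvexOn ℝ univ g) {Ga Gb : E}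
    (ha : HasGradientAt g Ga a) (hb : HasGradientAt g Gb b) : 0 ≤ ⟪Ga - Gb, a - b⟫ := by
  have hab := hc.add_inner_gradient_le ha b
  have hba := hc.add_inner_gradient_le hb a
  rw [← neg_sub a b, inner_neg_right] at hab
  rw [inner_sub_left]
  linarith

theorem StrictConvexOn.injective_gradient_s13 (hc : StrictConvexOn ℝ univ g) {G : E → E}
    (hg : ∀ z, HasGradientAt g (G z) z) : Function.Injective G := by
  intro a b hab
  by_contra hne
  have hlt_ab := hc.add_inner_gradient_lt (hg a) hne
  have hlt_ba := hc.add_inner_gradient_lt (hg b) (Ne.symm hne)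
  rw [hab, ← neg_sub a b, inner_neg_right] at hlt_ab
  linarith

/-- The minimizer `z` of `g` over a ball satisfies `⟪∇g z, z⟫ ≤ -r ‖∇g z‖` (test the first-order
condition against the point of norm `r` opposite to `∇g z`), while monotonicity of `∇g` gives
`⟪∇g 0, z⟫ ≤ ⟪∇g z, z⟫`. -/
theorem ConvexOn.norm_gradient_le_of_isMinOn_closedBall (hc : ConvexOn ℝ univ g) {r : ℝ}
    (hr : 0 < r) {z Gz G0 : E} (hz : z ∈ closedBall 0 r) (hmin : IsMinOn g (closedBall 0 r) z)
    (hgz : HasGradientAt g Gz z) (hg0 : HasGradientAt g G0 0) : ‖Gz‖ ≤ ‖G0‖ := by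
  set w : E := -(r / ‖Gz‖) • Gz
  have hinner_w : ⟪Gz, w⟫ = -(r * ‖Gz‖) := by
    rcases eq_or_ne ‖Gz‖ 0 with h | h
    · simp [w, norm_eq_zero.mp h]
    · rw [real_inner_smul_right, real_inner_self_eq_norm_sq]
      field_simp
  have hw : w ∈ closedBall 0 r := by
    rcases eq_or_ne ‖Gz‖ 0 with h | h
    · simp [w, norm_eq_zero.mp h, hr.le]
    · simp [w, norm_smul, abs_of_pos hr, h]
  have hfirst_order : 0 ≤ ⟪Gz, w - z⟫ := by
    simpa using hmin.localize.hasFDerivWithinAt_nonneg hgz.hasFDerivAt.hasFDerivWithinAt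
      (sub_mem_posTangentConeAt_of_segment_subset ((convex_closedBall 0 r).segment_subset hz hw))
  have hmono := hc.inner_sub_gradient_nonneg hgz hg0
  have hcauchy := real_inner_le_norm (-G0) z
  have hzr : ‖z‖ ≤ r := by simpa using hz
  rw [inner_sub_right, hinner_w] at hfirst_order
  rw [sub_zero, inner_sub_left] at hmono
  rw [inner_neg_left, norm_neg] at hcauchy
  nlinarith [norm_nonneg G0]

theorem ConvexOn.surjective_gradient [ProperSpace E] (hc : ConvexOn ℝ univ g) {G : E → E}
    (hg : ∀ z, HasGradientAt g (G z) z) (hG : Tendsto (fun z => ‖G z‖) (cocompact E) atTop) :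
    Function.Surjective G := by
  intro v
  set g' : E → ℝ := g - innerₛₗ ℝ v
  have hc' : ConvexOn ℝ univ g' := hc.sub ((innerₛₗ ℝ v).concaveOn convex_univ)
  have hg' : ∀ z, HasGradientAt g' (G z - v) z := by
    intro z
    rw [hasGradientAt_iff_hasFDerivAt, map_sub]
    exact (hg z).hasFDerivAt.sub (InnerProductSpace.toDual ℝ E v).hasFDerivAt
  obtain ⟨K, hK, hGK⟩ := mem_cocompact.mp (hG.eventually_gt_atTop (‖G 0 - v‖ + ‖v‖))
  obtain ⟨r, hr, hKr⟩ := hK.isBounded.subset_ball_lt 0 0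
  obtain ⟨z, hz, hmin⟩ := (isCompact_closedBall (0 : E) r).exists_isMinOn
    ⟨0, mem_closedBall_self hr.le⟩ fun z _ => (hg' z).continuousAt.continuousWithinAt
  have hbound := hc'.norm_gradient_le_of_isMinOn_closedBall hr hz hmin (hg' z) (hg' 0)
  have hzK : z ∈ K := by
    by_contra hzK
    have hfar : ‖G 0 - v‖ + ‖v‖ < ‖G z‖ := hGK hzK
    linarith [norm_sub_norm_le (G z) v]
  have hlocal : IsLocalMin g' z :=
    hmin.isLocalMin (mem_of_superset (isOpen_ball.mem_nhds (hKr hzK)) ball_subset_closedBall)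
  have hzero := hlocal.hasFDerivAt_eq_zero (hg' z).hasFDerivAt
  rw [LinearIsometryEquiv.map_eq_zero_iff, sub_eq_zero] at hzero
  exact ⟨z, hzero⟩

theorem StrictConvexOn.isHomeomorph_gradient [ProperSpace E] (hc : StrictConvexOn ℝ univ g)
    {G : E → E} (hg : ∀ z, HasGradientAt g (G z) z) (hGcont : Continuous G)
    (hG : Tendsto (fun z => ‖G z‖) (cocompact E) atTop) : IsHomeomorph G := by
  have hproper : IsProperMap G := by
    rw [isProperMap_iff_tendsto_cocompact, ← cobounded_eq_cocompact]
    rw [← cobounded_eq_cocompact] at hG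
    exact ⟨hGcont, tendsto_norm_atTop_iff_cobounded.mp hG⟩
  exact isHomeomorph_iff_continuous_isClosedMap_bijective.mpr
    ⟨hGcont, hproper.isClosedMap, hc.injective_gradient_s13 hg, hc.convexOn.surjective_gradient hg hG⟩

theorem hasGradientAt_of_continuousAt_subgradient {F : E → ℝ} {h : E → E} {v : E}
    (hh : ContinuousAt h v) (hsub : ∀ u w, F u + ⟪h u, w - u⟫ ≤ F w) :
    HasGradientAt F (h v) v := by
  rw [hasGradientAt_iff_isLittleO, Asymptotics.isLittleO_iff]
  intro c hc
  have hnear : ∀ᶠ w in 𝓝 v, ‖h w - h v‖ < c := by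
    have := (hh.sub (continuousAt_const (y := h v))).norm
    simpa using this.eventually (gt_mem_nhds (by simpa using hc))
  filter_upwards [hnear] with w hw
  have hlow := hsub v w
  have hhigh := hsub w v
  have hcauchy := real_inner_le_norm (h w - h v) (w - v)
  rw [← neg_sub w v, inner_neg_right] at hhigh
  rw [inner_sub_left] at hcauchy
  rw [Real.norm_eq_abs, abs_le]
  constructor <;> nlinarith [norm_nonneg (w - v)]

end Gradient

theorem le_mul_exp_of_hasDerivAt_le_neg_mul {V V' : ℝ → ℝ} {μ : ℝ}
    (hV : ∀ t, 0 ≤ t → HasDerivAt V (V' t) t) (hbound : ∀ t, 0 ≤ t → V' t ≤ -μ * V t)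
    {t : ℝ} (ht : 0 ≤ t) : V t ≤ V 0 * Real.exp (-(μ * t)) := by
  have hgronwall := le_gronwallBound_of_liminf_deriv_right_le (a := 0) (b := t) (K := -μ) (ε := 0)
    (fun s hs => (hV s hs.1).continuousAt.continuousWithinAt)
    (fun s hs _ hr => (hV s hs.1).hasDerivWithinAt.liminf_right_slope_le hr) le_rfl
    (fun s hs => by linarith [hbound s hs.1]) t ⟨ht, le_rfl⟩
  simpa [gronwallBound_ε0] using hgronwall

section Fenchel

variable {n : ℕ} {g : EuclideanSpace ℝ (Fin n) → ℝ} {u v : EuclideanSpace ℝ (Fin n)}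

local notation "E" => EuclideanSpace ℝ (Fin n)

theorem le_fenchel (hc : ConvexOn ℝ univ g) (hg : HasGradientAt g v u) (z : E) :
    ⟪v, z⟫ - g z ≤ fenchel g v :=
  le_ciSup ⟨_, forall_mem_range.2 (hc.inner_sub_le_of_hasGradientAt hg)⟩ z

theorem fenchel_eq_of_hasGradientAt (hc : ConvexOn ℝ univ g) (hg : HasGradientAt g v u) :
    fenchel g v = ⟪v, u⟫ - g u :=
  le_antisymm (ciSup_le (hc.inner_sub_le_of_hasGradientAt hg)) (le_fenchel hc hg u)

theorem hasGradientAt_fenchel (hc : ConvexOn ℝ univ g) {h : E → E}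
    (hg : ∀ v, HasGradientAt g v (h v)) (hh : Continuous h) (v : E) :
    HasGradientAt (fenchel g) (h v) v := by
  refine hasGradientAt_of_continuousAt_subgradient hh.continuousAt fun u w => ?_
  have := le_fenchel hc (hg w) (h u)
  rw [fenchel_eq_of_hasGradientAt hc (hg u), inner_sub_right, real_inner_comm w (h u),
    real_inner_comm u (h u)]
  linarith

theorem LegendreType.exists_inverse_gradient {φ : E → ℝ} (hleg : LegendreType φ)
    (hφ : ContDiff ℝ 1 φ) (hc : StrictConvexOn ℝ univ φ) :
    ∃ ψ : E → E, (∀ v, HasGradientAt φ v (ψ v)) ∧ ∀ v, HasGradientAt (fenchel φ) (ψ v) v := by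
  have hgrad : ∀ z, HasGradientAt φ (gradient φ z) z :=
    fun z => (hφ.differentiable one_ne_zero z).hasGradientAt
  have hcont : Continuous (gradient φ) :=
    (InnerProductSpace.toDual ℝ E).symm.continuous.comp (hφ.continuous_fderiv one_ne_zero)
  set e := (hc.isHomeomorph_gradient hgrad hcont hleg).homeomorph
  have hinv : ∀ v, HasGradientAt φ v (e.symm v) := fun v => by
    have hv : gradient φ (e.symm v) = v := e.apply_symm_apply v
    simpa only [hv] using hgrad (e.symm v)
  exact ⟨e.symm, hinv, hasGradientAt_fenchel hc.convexOn hinv e.symm.continuous⟩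

theorem bregman_eq_of_hasGradientAt {φ : E → ℝ} (hc : ConvexOn ℝ univ φ)
    (hφ : HasGradientAt φ v u) (y : E) : bregman φ y u = φ y + fenchel φ v - ⟪v, y⟫ := by
  rw [bregman, hφ.gradient, fenchel_eq_of_hasGradientAt hc hφ, inner_sub_right]
  ring

theorem hasDerivAt_bregman_comp {φ : E → ℝ} (hc : ConvexOn ℝ univ φ) {ψ : E → E}
    (hφψ : ∀ v, HasGradientAt φ v (ψ v)) (hψ : ∀ v, HasGradientAt (fenchel φ) (ψ v) v)
    (y : E) {x : ℝ → E} {x' : E} {t : ℝ} (hx : HasDerivAt x x' t) :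
    HasDerivAt (fun s => bregman φ y (ψ (x s))) ⟪x', ψ (x t) - y⟫ t := by
  simp_rw [bregman_eq_of_hasGradientAt hc (hφψ _)]
  refine ((((hψ (x t)).comp_hasDerivAt hx).const_add (φ y)).sub
    (hx.inner ℝ (hasDerivAt_const t y))).congr_deriv ?_
  rw [inner_sub_right, inner_zero_right, real_inner_comm]
  ring

end Fenchel

theorem mirror_descent_strongly_convex_rate_general {n : ℕ} (f φ : EuclideanSpace ℝ (Fin n) → ℝ)
    (ybar : EuclideanSpace ℝ (Fin n)) (hmin : ∀ z, f ybar ≤ f z)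
    (hφ : ContDiff ℝ 2 φ) (hφconv : StrictConvexOn ℝ Set.univ φ)
    (hleg : LegendreType φ)
    (μ : ℝ)
    (hstrong : ∀ y y' : EuclideanSpace ℝ (Fin n),
      f y + ⟪gradient f y, y' - y⟫ + μ * bregman φ y' y ≤ f y')
    (x₀ y₀ : EuclideanSpace ℝ (Fin n))
    (x y : ℝ → EuclideanSpace ℝ (Fin n)) (hx0 : x 0 = x₀)
    (hode : ∀ t : ℝ, 0 ≤ t →
      HasDerivAt x (-gradient f (gradient (fenchel φ) (x t))) t)
    (hy : y = fun t => gradient (fenchel φ) (x t))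
    (hy₀ : y₀ = gradient (fenchel φ) x₀) :
    ∀ t : ℝ, 0 ≤ t →
      bregman φ ybar (y t) ≤ bregman φ ybar y₀ * Real.exp (-(μ * t)) := by
  obtain ⟨ψ, hφψ, hψ⟩ := hleg.exists_inverse_gradient (hφ.of_le one_le_two) hφconv
  have hgradψ : gradient (fenchel φ) = ψ := funext fun v => (hψ v).gradient
  subst hy hy₀ hx0
  rw [hgradψ] at hode ⊢
  have hderiv : ∀ t, 0 ≤ t → HasDerivAt (fun s => bregman φ ybar (ψ (x s)))
      ⟪-gradient f (ψ (x t)), ψ (x t) - ybar⟫ t := fun t ht =>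
    hasDerivAt_bregman_comp hφconv.convexOn hφψ hψ ybar (hode t ht)
  have hdecay : ∀ t, 0 ≤ t →
      ⟪-gradient f (ψ (x t)), ψ (x t) - ybar⟫ ≤ -μ * bregman φ ybar (ψ (x t)) := fun t _ => by
    have := hstrong (ψ (x t)) ybar
    rw [inner_neg_left, ← neg_sub ybar, inner_neg_right, neg_neg]
    linarith [hmin (ψ (x t))]
  exact fun t ht => le_mul_exp_of_hasDerivAt_le_neg_mul hderiv hdecay ht

/-- strongly convex rate: if `f` is `μ`-strongly convex w.r.t. `φ`
(`μ > 0`), then along the mirror descent dynamics,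
`D_φ(ȳ, y(t)) ≤ D_φ(ȳ, y₀) e^{−μt}` for all `t ≥ 0`. -/
theorem mirror_descent_strongly_convex_rate {n : ℕ} (f φ : EuclideanSpace ℝ (Fin n) → ℝ)
    (hf : ContDiff ℝ 1 f) (hfconv : StrictConvexOn ℝ Set.univ f)
    (ybar : EuclideanSpace ℝ (Fin n)) (hmin : ∀ z, f ybar ≤ f z)
    (hφ : ContDiff ℝ 2 φ) (hφconv : StrictConvexOn ℝ Set.univ φ)
    (hleg : LegendreType φ)
    (μ : ℝ) (hμ : 0 < μ)
    (hstrong : ∀ y y' : EuclideanSpace ℝ (Fin n),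
      f y + ⟪gradient f y, y' - y⟫ + μ * bregman φ y' y ≤ f y')
    (x₀ y₀ : EuclideanSpace ℝ (Fin n))
    (x y : ℝ → EuclideanSpace ℝ (Fin n)) (hx0 : x 0 = x₀)
    (hode : ∀ t : ℝ, 0 ≤ t →
      HasDerivAt x (-gradient f (gradient (fenchel φ) (x t))) t)
    (hy : y = fun t => gradient (fenchel φ) (x t))
    (hy₀ : y₀ = gradient (fenchel φ) x₀) :
    ∀ t : ℝ, 0 ≤ t →
      bregman φ ybar (y t) ≤ bregman φ ybar y₀ * Real.exp (-(μ * t)) :=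
  mirror_descent_strongly_convex_rate_general f φ ybar hmin hφ hφconv hleg μ hstrong x₀ y₀ x y hx0
    hode hy hy₀
end
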